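/- Let D be a degree sequence with maximum d, Σ its reverse cumulative histogram, and Φ the associated Erdős–Gallai slacks. If one entry of D of value d − k + 1 is decreased by one (so σ_k decreases by one, all other σ_j unchanged, d fixed), then for every j < k, the new slack is φ'_j = φ_j − 1 if k + σ_j > d, and φ'_j = φ_j otherwise. -/

import Mathlib

/-!
Lowering one entry of value `d − k + 1` by one lowers `σ_k` by one and leaves every other `σ_m`,
`m ≤ d`, unchanged. For `j < k` the slack `φ_j` sees this only through the increments
`σ_k − σ_{k−1}` (down by one, weight `min(σ_j, d − k + 1)`) and `σ_{k+1} − σ_k` (up by one,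
weight `min(σ_j, d − k)`, present only when `k < d`). The two weights differ by one exactly when
`σ_j > d − k`, and otherwise cancel.
-/

open Finset

section Histogram

variable {ι : Type*} [DecidableEq ι] (s : Finset ι) (D : ι → ℕ) {i₀ : ι} {v : ℕ}

theorem card_filter_le_update_of_ne {t : ℕ} (hD : D i₀ = v + 1) (ht : t ≠ v + 1) :
    #(s.filter fun i => t ≤ Function.update D i₀ v i) = #(s.filter fun i => t ≤ D i) := by
  refine congrArg card (filter_congr fun i _ => ?_)
  rcases eq_or_ne i i₀ with rfl | hi
  · rw [Function.update_self, hD]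
    omega
  · rw [Function.update_of_ne hi]

theorem card_filter_le_update_add_one (hi₀ : i₀ ∈ s) (hD : D i₀ = v + 1) :
    #(s.filter fun i => v + 1 ≤ Function.update D i₀ v i) + 1
      = #(s.filter fun i => v + 1 ≤ D i) := by
  have herase : (s.filter fun i => v + 1 ≤ Function.update D i₀ v i)
      = (s.filter fun i => v + 1 ≤ D i).erase i₀ := by
    ext i
    rcases eq_or_ne i i₀ with rfl | hi
    · simp
    · simp [hi]
  rw [herase, card_erase_add_one (mem_filter.mpr ⟨hi₀, hD.ge⟩)]

end Histogram

def erdosGallaiSlack (d : ℕ) (σ : ℕ → ℕ) (j : ℕ) : ℤ :=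
  (σ j : ℤ) * ((σ j : ℤ) - 1) +
    (∑ i ∈ Icc (j + 1) d, ((σ i : ℤ) - (σ (i - 1) : ℤ)) * min (σ j : ℤ) ((d : ℤ) - (i : ℤ) + 1)) -
    ∑ i ∈ Icc 1 j, ((σ i : ℤ) - (σ (i - 1) : ℤ)) * ((d : ℤ) - (i : ℤ) + 1)

section Dip

variable {σ τ : ℕ → ℕ} {b k : ℕ} (hτ : ∀ m ≤ b, m ≠ k → τ m = σ m) (hτk : τ k + 1 = σ k)
include hτ hτk

theorem sum_Icc_increment_mul_of_dip (w : ℕ → ℤ) {a : ℕ} (hak : a < k) (hkb : k ≤ b) :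
    ∑ i ∈ Icc (a + 1) b, ((τ i : ℤ) - τ (i - 1)) * w i
      = ∑ i ∈ Icc (a + 1) b, ((σ i : ℤ) - σ (i - 1)) * w i - w k + if k < b then w (k + 1) else 0 := by
  have hterm : ∀ i ∈ Icc (a + 1) b, ((τ i : ℤ) - τ (i - 1)) * w i
      = ((σ i : ℤ) - σ (i - 1)) * w i - (if i = k then w k else 0)
          + if i = k + 1 then w (k + 1) else 0 := by
    intro i hi
    rw [mem_Icc] at hi
    have hτi : (τ i : ℤ) = σ i - if i = k then 1 else 0 := by
      split_ifs with h
      · subst h; omega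
      · rw [hτ i hi.2 h, sub_zero]
    have hτpred : (τ (i - 1) : ℤ) = σ (i - 1) - if i = k + 1 then 1 else 0 := by
      split_ifs with h
      · subst h; simp only [Nat.add_sub_cancel]; omega
      · rw [hτ (i - 1) (by omega) (by omega), sub_zero]
    rw [hτi, hτpred]
    split_ifs <;> subst_vars <;> first | omega | ring
  rw [sum_congr rfl hterm, sum_add_distrib, sum_sub_distrib, sum_ite_eq', sum_ite_eq',
    if_pos (mem_Icc.mpr ⟨hak, hkb⟩)]
  congr 2
  exact propext (by simp only [mem_Icc]; omega)

theorem erdosGallaiSlack_of_dip {j : ℕ} (hjk : j < k) (hkb : k ≤ b) :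
    erdosGallaiSlack b τ j = erdosGallaiSlack b σ j - min (σ j : ℤ) ((b : ℤ) - k + 1)
      + if k < b then min (σ j : ℤ) ((b : ℤ) - k) else 0 := by
  have hτj : τ j = σ j := hτ j (by omega) hjk.ne
  have hlow : ∑ i ∈ Icc 1 j, ((τ i : ℤ) - τ (i - 1)) * ((b : ℤ) - i + 1)
      = ∑ i ∈ Icc 1 j, ((σ i : ℤ) - σ (i - 1)) * ((b : ℤ) - i + 1) := by
    refine sum_congr rfl fun i hi => ?_
    rw [mem_Icc] at hi
    rw [hτ i (by omega) (by omega), hτ (i - 1) (by omega) (by omega)]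
  have hhigh := sum_Icc_increment_mul_of_dip hτ hτk
    (fun i => min (σ j : ℤ) ((b : ℤ) - i + 1)) hjk hkb
  have hweight : (b : ℤ) - (k + 1 : ℕ) + 1 = (b : ℤ) - k := by push_cast; ring
  simp only [hweight] at hhigh
  unfold erdosGallaiSlack
  rw [hτj, hlow, hhigh]
  ring

end Dip

theorem sub_min_add_ite_min_eq (x : ℤ) (s : ℕ) {d k : ℕ} (hkd : k ≤ d) :
    x - min (s : ℤ) ((d : ℤ) - k + 1) + (if k < d then min (s : ℤ) ((d : ℤ) - k) else 0)
      = if d < k + s then x - 1 else x := by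
  split_ifs <;> omega

theorem phi_drop_below_general (n d k i₀ : ℕ) (hi₀ : i₀ < n) (hkd : k ≤ d)
    (D : ℕ → ℕ)
    (hval : D i₀ = d - k + 1)
    (D' : ℕ → ℕ) (hD' : D' = Function.update D i₀ (d - k))
    (σ σ' : ℕ → ℕ)
    (hσ : ∀ j, σ j = ((Finset.range n).filter (fun i => d - j + 1 ≤ D i)).card)
    (hσ' : ∀ j, σ' j = ((Finset.range n).filter (fun i => d - j + 1 ≤ D' i)).card)
    (φ φ' : ℕ → ℤ)
    (hφ : ∀ j, φ j =
      (σ j : ℤ) * ((σ j : ℤ) - 1) +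
        (∑ i ∈ Finset.Icc (j + 1) d,
          ((σ i : ℤ) - (σ (i - 1) : ℤ)) * min ((σ j : ℤ)) ((d : ℤ) - (i : ℤ) + 1)) -
        ∑ i ∈ Finset.Icc 1 j, ((σ i : ℤ) - (σ (i - 1) : ℤ)) * ((d : ℤ) - (i : ℤ) + 1))
    (hφ' : ∀ j, φ' j =
      (σ' j : ℤ) * ((σ' j : ℤ) - 1) +
        (∑ i ∈ Finset.Icc (j + 1) d,
          ((σ' i : ℤ) - (σ' (i - 1) : ℤ)) * min ((σ' j : ℤ)) ((d : ℤ) - (i : ℤ) + 1)) -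
        ∑ i ∈ Finset.Icc 1 j, ((σ' i : ℤ) - (σ' (i - 1) : ℤ)) * ((d : ℤ) - (i : ℤ) + 1)) :
    ∀ j, 1 ≤ j → j < k → φ' j = if d < k + σ j then φ j - 1 else φ j := by
  subst hD'
  have hoff : ∀ m ≤ d, m ≠ k → σ' m = σ m := fun m hm hmk => by
    rw [hσ, hσ', card_filter_le_update_of_ne _ _ hval (by omega)]
  have hat : σ' k + 1 = σ k := by
    rw [hσ, hσ', card_filter_le_update_add_one _ _ (mem_range.mpr hi₀) hval]
  intro j _ hjk
  rw [show φ' j = erdosGallaiSlack d σ' j from hφ' j, show φ j = erdosGallaiSlack d σ j from hφ j,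
    erdosGallaiSlack_of_dip hoff hat hjk hkd]
  exact sub_min_add_ite_min_eq _ _ hkd

/-- Lemma 2(c): after decreasing one entry of value `d − k + 1` by one, for `j < k`
the slack satisfies `φ'_j = φ_j − 1` if `k + σ_j > d` and `φ'_j = φ_j` otherwise. -/
theorem phi_drop_below (n d k i₀ : ℕ) (hi₀ : i₀ < n) (hk : 1 ≤ k) (hkd : k ≤ d)
    (D : ℕ → ℕ)
    (hanti : ∀ i j, i ≤ j → j < n → D j ≤ D i)
    (hpos : ∀ i, i < n → 0 < D i)
    (hmaxle : ∀ i, i < n → D i ≤ d)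
    (hmaxex : ∃ i, i < n ∧ D i = d)
    (hval : D i₀ = d - k + 1)
    (D' : ℕ → ℕ) (hD' : D' = Function.update D i₀ (d - k))
    (σ σ' : ℕ → ℕ)
    (hσ : ∀ j, σ j = ((Finset.range n).filter (fun i => d - j + 1 ≤ D i)).card)
    (hσ' : ∀ j, σ' j = ((Finset.range n).filter (fun i => d - j + 1 ≤ D' i)).card)
    (φ φ' : ℕ → ℤ)
    (hφ : ∀ j, φ j =
      (σ j : ℤ) * ((σ j : ℤ) - 1) +
        (∑ i ∈ Finset.Icc (j + 1) d,
          ((σ i : ℤ) - (σ (i - 1) : ℤ)) * min ((σ j : ℤ)) ((d : ℤ) - (i : ℤ) + 1)) -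
        ∑ i ∈ Finset.Icc 1 j, ((σ i : ℤ) - (σ (i - 1) : ℤ)) * ((d : ℤ) - (i : ℤ) + 1))
    (hφ' : ∀ j, φ' j =
      (σ' j : ℤ) * ((σ' j : ℤ) - 1) +
        (∑ i ∈ Finset.Icc (j + 1) d,
          ((σ' i : ℤ) - (σ' (i - 1) : ℤ)) * min ((σ' j : ℤ)) ((d : ℤ) - (i : ℤ) + 1)) -
        ∑ i ∈ Finset.Icc 1 j, ((σ' i : ℤ) - (σ' (i - 1) : ℤ)) * ((d : ℤ) - (i : ℤ) + 1)) :
    ∀ j, 1 ≤ j → j < k → φ' j = if d < k + σ j then φ j - 1 else φ j :=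
  phi_drop_below_general n d k i₀ hi₀ hkd D hval D' hD' σ σ' hσ hσ' φ φ' hφ hφ'
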